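/- arXiv:2107.08080 — 4 statements merged into one kernel-verified Lean document; each statement's English description precedes it below -/
import Mathlib

section
/- Let V be a finite-dimensional vector space over a field k, and let P₁, ..., P_s ⊂ V be an irredundant collection of linear subspaces with P₁ ∩ ... ∩ P_s = 0 (meaning the intersection of any proper subcollection is nonzero). If dim Pᵢ ≤ r for every i, then dim(P₁ + ... + P_s) ≤ r + (r+1)²/4. -/
open Module Submodule

lemma aux1 {k V : Type*} [Field k] [AddCommGroup V] [Module k V]
    [FiniteDimensional k V] {s : ℕ} (Q P : Fin s → Submodule k V)
    (hle : ∀ i j, i ≠ j → Q i ≤ P j) (hdisj : ∀ i, Q i ⊓ P i = ⊥)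
    (S : Finset (Fin s)) :
    ∑ i ∈ S, finrank k (Q i) ≤ finrank k ↥(⨆ i ∈ S, Q i) := by
  induction S using Finset.induction with
  | empty => simp
  | @insert a S ha ih =>
    have hsup : (⨆ i ∈ insert a S, Q i) = Q a ⊔ ⨆ i ∈ S, Q i := by
      simp only [Finset.mem_insert, iSup_or, iSup_sup_eq, iSup_iSup_eq_left]
    have hS : (⨆ i ∈ S, Q i) ≤ P a := by
      refine iSup₂_le fun j hj => hle j a ?_
      rintro rfl; exact ha hj
    have hinf : Q a ⊓ ⨆ i ∈ S, Q i = ⊥ := by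
      refine le_bot_iff.mp ?_
      calc Q a ⊓ ⨆ i ∈ S, Q i ≤ Q a ⊓ P a := inf_le_inf_left _ hS
      _ = ⊥ := hdisj a
    have heq := Submodule.finrank_sup_add_finrank_inf_eq (Q a) (⨆ i ∈ S, Q i)
    rw [hinf, finrank_bot] at heq
    rw [Finset.sum_insert ha, hsup]
    omega

lemma aux2 {k V : Type*} [Field k] [AddCommGroup V] [Module k V]
    [FiniteDimensional k V] {s : ℕ} (P : Fin s → Submodule k V) (W : Submodule k V)
    (S : Finset (Fin s)) :
    finrank k ↥(W ⊔ ⨆ i ∈ S, P i) + ∑ i ∈ S, finrank k ↥(P i ⊓ W) ≤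
      finrank k ↥W + ∑ i ∈ S, finrank k ↥(P i) := by
  induction S using Finset.induction with
  | empty => rw [show W ⊔ ⨆ i ∈ (∅ : Finset (Fin s)), P i = W by simp]; simp
  | @insert a S ha ih =>
    have hsup : (⨆ i ∈ insert a S, P i) = P a ⊔ ⨆ i ∈ S, P i := by
      simp only [Finset.mem_insert, iSup_or, iSup_sup_eq, iSup_iSup_eq_left]
    have hre : W ⊔ (P a ⊔ ⨆ i ∈ S, P i) = (W ⊔ ⨆ i ∈ S, P i) ⊔ P a := by
      rw [sup_comm (P a), ← sup_assoc]
    have heq := Submodule.finrank_sup_add_finrank_inf_eq (W ⊔ ⨆ i ∈ S, P i) (P a)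
    have hmono : finrank k ↥(P a ⊓ W) ≤ finrank k ↥((W ⊔ ⨆ i ∈ S, P i) ⊓ P a) :=
      Submodule.finrank_mono (le_inf (inf_le_right.trans le_sup_left) inf_le_left)
    rw [Finset.sum_insert ha, Finset.sum_insert ha, hsup, hre]
    omega

/-- If `P₁, ..., P_s` is an irredundant collection of subspaces of a
finite-dimensional vector space `V` (the total intersection is zero but every proper
subcollection has nonzero intersection) with `dim Pᵢ ≤ r`, then
`dim (P₁ + ... + P_s) ≤ r + (r+1)²/4`. -/
theorem stmt0 {k V : Type*} [Field k] [AddCommGroup V] [Module k V]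
    [FiniteDimensional k V] {s r : ℕ} (P : Fin s → Submodule k V)
    (hzero : (⨅ i, P i) = ⊥)
    (hirr : ∀ S : Finset (Fin s), S ≠ Finset.univ → (⨅ i ∈ S, P i) ≠ ⊥)
    (hdim : ∀ i, Module.finrank k (P i) ≤ r) :
    4 * Module.finrank k ↥(⨆ i, P i) ≤ 4 * r + (r + 1) ^ 2 := by
  by_cases h0 : s = 0
  · subst h0
    rw [show (⨆ i : Fin 0, P i) = ⊥ from iSup_of_empty P, finrank_bot]
    positivity
  by_cases h1 : s = 1
  · subst h1
    have hb : P default = ⊥ := by rw [← iInf_unique P]; exact hzero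
    rw [iSup_unique P, hb, finrank_bot]
    positivity
  have hs2 : 2 ≤ s := by omega
  -- the "complementary intersections"
  set Q : Fin s → Submodule k V := fun i => ⨅ j ∈ Finset.univ.erase i, P j with hQdef
  have hQne : ∀ i, Q i ≠ ⊥ := by
    intro i
    refine hirr _ fun h => ?_
    have := Finset.mem_univ i
    rw [← h] at this
    simp at this
  have hQP : ∀ i j, i ≠ j → Q i ≤ P j := by
    intro i j hne
    exact iInf₂_le j (Finset.mem_erase.mpr ⟨fun h => hne h.symm, Finset.mem_univ j⟩)
  have hQdisj : ∀ i, Q i ⊓ P i = ⊥ := by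
    intro i
    refine le_bot_iff.mp ?_
    rw [← hzero]
    refine le_iInf fun j => ?_
    by_cases hj : j = i
    · subst hj; exact inf_le_right
    · exact inf_le_left.trans (iInf₂_le j (Finset.mem_erase.mpr ⟨hj, Finset.mem_univ j⟩))
  set W : Submodule k V := ⨆ i, Q i with hWdef
  -- each Q i is nonzero
  have hq1 : ∀ i, 1 ≤ finrank k (Q i) := by
    intro i
    have : finrank k (Q i) ≠ 0 := fun h => hQne i (Submodule.finrank_eq_zero.mp h)
    omega
  -- sum of the q's is at most dim W
  have hA : ∑ i, finrank k (Q i) ≤ finrank k W := by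
    have h := aux1 Q P hQP hQdisj Finset.univ
    have he : (⨆ i ∈ Finset.univ, Q i) = W := by simp [hWdef]
    rwa [he] at h
  -- facts about the partial sups Wi
  have hWi : ∀ i : Fin s,
      finrank k W ≤ finrank k ↥(P i ⊓ W) + finrank k (Q i) ∧ s - 1 ≤ r := by
    intro i
    set Wi : Submodule k V := ⨆ j ∈ Finset.univ.erase i, Q j with hWidef
    have hWiP : Wi ≤ P i :=
      iSup₂_le fun j hj => hQP j i (Finset.mem_erase.mp hj).1
    have hWir : finrank k Wi ≤ r := (Submodule.finrank_mono hWiP).trans (hdim i)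
    have hWle : W ≤ Wi ⊔ Q i := by
      refine iSup_le fun j => ?_
      by_cases hj : j = i
      · subst hj; exact le_sup_right
      · exact (le_iSup₂ (f := fun j _ => Q j) j
          (Finset.mem_erase.mpr ⟨hj, Finset.mem_univ j⟩)).trans le_sup_left
    have hsum := Submodule.finrank_sup_add_finrank_inf_eq Wi (Q i)
    have hB : finrank k W ≤ finrank k Wi + finrank k (Q i) := by
      have := Submodule.finrank_mono (M := V) hWle
      omega
    have hD : finrank k Wi ≤ finrank k ↥(P i ⊓ W) :=
      Submodule.finrank_mono (le_inf hWiP (iSup₂_le fun j _ => le_iSup Q j))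
    have hE : ∑ j ∈ Finset.univ.erase i, finrank k (Q j) ≤ finrank k Wi :=
      aux1 Q P hQP hQdisj _
    have hcard : s - 1 ≤ ∑ j ∈ Finset.univ.erase i, finrank k (Q j) := by
      have := Finset.card_nsmul_le_sum (Finset.univ.erase i)
        (fun j => finrank k (Q j)) 1 (fun j _ => hq1 j)
      simpa [Finset.card_erase_of_mem] using this
    exact ⟨hB.trans (by omega), by omega⟩
  have h3 : ∀ i : Fin s, finrank k W ≤ finrank k ↥(P i ⊓ W) + finrank k (Q i) :=
    fun i => (hWi i).1
  have h5 : s - 1 ≤ r := (hWi ⟨0, by omega⟩).2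
  -- W is contained in the sup of the P's
  have hWsub : W ≤ ⨆ i, P i := by
    refine iSup_le fun i => ?_
    obtain ⟨j, hj⟩ : ∃ j : Fin s, j ≠ i := by
      by_cases hi : i = ⟨0, by omega⟩
      · exact ⟨⟨1, by omega⟩, by simp [hi, Fin.ext_iff]⟩
      · exact ⟨⟨0, by omega⟩, fun h => hi h.symm⟩
    exact (hQP i j (fun h => hj h.symm)).trans (le_iSup P j)
  -- the main dimension-counting inequality
  have hF : finrank k ↥(⨆ i, P i) + ∑ i, finrank k ↥(P i ⊓ W) ≤
      finrank k W + ∑ i, finrank k ↥(P i) := by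
    have h := aux2 P W Finset.univ
    have he : W ⊔ (⨆ i ∈ Finset.univ, P i) = ⨆ i, P i := by
      rw [show (⨆ i ∈ Finset.univ, P i) = ⨆ i, P i by simp]
      exact sup_eq_right.mpr hWsub
    rwa [he] at h
  -- assemble the arithmetic
  have h1 : s ≤ ∑ i, finrank k (Q i) := by
    have := Finset.card_nsmul_le_sum Finset.univ
      (fun j => finrank k (Q j)) 1 (fun j _ => hq1 j)
    simpa using this
  have h3s : s * finrank k W ≤
      (∑ i, finrank k ↥(P i ⊓ W)) + ∑ i, finrank k (Q i) := by
    have := Finset.sum_le_sum (fun i (_ : i ∈ Finset.univ) => h3 i)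
    simpa [Finset.sum_add_distrib, Finset.sum_const, Finset.card_univ, mul_comm]
      using this
  have hps : (∑ i, finrank k ↥(P i)) ≤ s * r := by
    have := Finset.sum_le_sum (fun i (_ : i ∈ Finset.univ) => hdim i)
    simpa [Finset.sum_const, Finset.card_univ] using this
  set n := finrank k ↥(⨆ i, P i)
  set w := finrank k W
  have hkey : n + s * w ≤ 2 * w + s * r := by
    calc n + s * w ≤ n + ((∑ i, finrank k ↥(P i ⊓ W)) + ∑ i, finrank k (Q i)) := by
          omega
    _ ≤ (w + ∑ i, finrank k ↥(P i)) + w := by omega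
    _ ≤ 2 * w + s * r := by omega
  have hw : s ≤ w := le_trans h1 hA
  -- final quadratic arithmetic
  have hkey' : (n : ℤ) + s * w ≤ 2 * w + s * r := by exact_mod_cast hkey
  have hw' : (s : ℤ) ≤ w := by exact_mod_cast hw
  have hs2' : (2 : ℤ) ≤ s := by exact_mod_cast hs2
  have h5' : (s : ℤ) ≤ r + 1 := by
    have : s ≤ r + 1 := by omega
    exact_mod_cast this
  have : (4 : ℤ) * n ≤ 4 * r + (r + 1) ^ 2 := by
    nlinarith [mul_nonneg (by linarith : (0:ℤ) ≤ (s:ℤ) - 2)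
        (by linarith : (0:ℤ) ≤ (w:ℤ) - s),
      sq_nonneg (2 * (s:ℤ) - 3 - r)]
  exact_mod_cast this
end

section
/- Let P₁, ..., P_s ⊂ V be an irredundant collection of linear subspaces of V with P₁ ∩ ... ∩ P_s = 0 and dim Pᵢ ≤ r for all i, where the minimal dimension of pairwise intersections Pᵢ ∩ Pⱼ equals a. Then s ≤ a + 2. -/
/-- For an irredundant collection `P₁, ..., P_s` of subspaces of a
finite-dimensional vector space with zero total intersection and `dim Pᵢ ≤ r`,
if `a` is the minimal dimension of the pairwise intersections `Pᵢ ∩ Pⱼ`, then `s ≤ a + 2`. -/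
theorem stmt1 {k V : Type*} [Field k] [AddCommGroup V] [Module k V]
    [FiniteDimensional k V] {s r a : ℕ} (hs : 2 ≤ s) (P : Fin s → Submodule k V)
    (hzero : (⨅ i, P i) = ⊥)
    (hirr : ∀ S : Finset (Fin s), S ≠ Finset.univ → (⨅ i ∈ S, P i) ≠ ⊥)
    (hdim : ∀ i, Module.finrank k (P i) ≤ r)
    (hamin : ∃ i j : Fin s, i ≠ j ∧ Module.finrank k ↥(P i ⊓ P j) = a)
    (hale : ∀ i j : Fin s, i ≠ j → a ≤ Module.finrank k ↥(P i ⊓ P j)) :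
    s ≤ a + 2 := by
  obtain ⟨i, j, hij, ha⟩ := hamin
  have huniv : (⨅ x ∈ (Finset.univ : Finset (Fin s)), P x) = ⊥ := by
    simpa using hzero
  -- key strictness: adding a new subspace strictly shrinks the intersection
  have hsub : ∀ T : Finset (Fin s), ∀ m ∉ T,
      (⨅ x ∈ insert m T, P x) < ⨅ x ∈ T, P x := by
    intro T m hm
    rw [Finset.iInf_insert]
    refine lt_of_le_of_ne inf_le_right ?_
    intro heq
    have hTm : (⨅ x ∈ T, P x) ≤ P m := by
      rw [← heq]; exact inf_le_left
    have hne : (Finset.univ.erase m : Finset (Fin s)) ≠ Finset.univ := by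
      intro h
      have := Finset.mem_univ m
      rw [← h] at this
      exact (Finset.notMem_erase m _) this
    have hTsub : T ⊆ Finset.univ.erase m := by
      intro x hx
      exact Finset.mem_erase.mpr ⟨fun h => hm (h ▸ hx), Finset.mem_univ x⟩
    have hle : (⨅ x ∈ (Finset.univ.erase m : Finset (Fin s)), P x) ≤ ⨅ x ∈ T, P x :=
      biInf_mono (fun x hx => hTsub hx)
    have hle2 : (⨅ x ∈ (Finset.univ.erase m : Finset (Fin s)), P x) ≤ P m :=
      hle.trans hTm
    have hbot : (⨅ x ∈ (Finset.univ.erase m : Finset (Fin s)), P x) = ⊥ := by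
      have hsplit : (⨅ x ∈ (Finset.univ : Finset (Fin s)), P x) =
          P m ⊓ ⨅ x ∈ (Finset.univ.erase m : Finset (Fin s)), P x := by
        rw [← Finset.iInf_insert, Finset.insert_erase (Finset.mem_univ m)]
      rw [huniv, inf_eq_right.mpr hle2] at hsplit
      exact hsplit.symm
    exact hirr _ hne hbot
  have main : ∀ S : Finset (Fin s), i ∈ S → j ∈ S →
      S.card + Module.finrank k ↥(⨅ x ∈ S, P x) ≤ a + 2 := by
    intro S
    induction S using Finset.strongInduction with
    | _ S IH =>
      intro hi hj
      by_cases hS : S = {i, j}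
      · subst hS
        have hcard : ({i, j} : Finset (Fin s)).card = 2 := by
          rw [Finset.card_insert_of_notMem (by simpa using hij), Finset.card_singleton]
        have hinf : (⨅ x ∈ ({i, j} : Finset (Fin s)), P x) = P i ⊓ P j := by
          rw [Finset.iInf_insert, Finset.iInf_singleton]
        rw [hcard, hinf, ha]
        omega
      · have hij_sub : ({i, j} : Finset (Fin s)) ⊂ S := by
          refine Finset.ssubset_iff_subset_ne.mpr ⟨?_, fun h => hS h.symm⟩
          intro x hx
          rcases Finset.mem_insert.mp hx with h | h
          · exact h ▸ hi
          · exact (Finset.mem_singleton.mp h) ▸ hj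
        obtain ⟨m, hmS, hm2⟩ := Finset.exists_of_ssubset hij_sub
        have hmi : m ≠ i := fun h => hm2 (by simp [h])
        have hmj : m ≠ j := fun h => hm2 (by simp [h])
        set T := S.erase m with hT
        have hiT : i ∈ T := Finset.mem_erase.mpr ⟨fun h => hmi h.symm, hi⟩
        have hjT : j ∈ T := Finset.mem_erase.mpr ⟨fun h => hmj h.symm, hj⟩
        have hTss : T ⊂ S := Finset.erase_ssubset hmS
        have hIH := IH T hTss hiT hjT
        have hmT : m ∉ T := Finset.notMem_erase m S
        have hlt : (⨅ x ∈ insert m T, P x) < ⨅ x ∈ T, P x := hsub T m hmT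
        rw [Finset.insert_erase hmS] at hlt
        have hrank : Module.finrank k ↥(⨅ x ∈ S, P x) <
            Module.finrank k ↥(⨅ x ∈ T, P x) :=
          Submodule.finrank_lt_finrank_of_lt hlt
        have hcard : T.card + 1 = S.card := Finset.card_erase_add_one hmS
        omega
  have h := main Finset.univ (Finset.mem_univ i) (Finset.mem_univ j)
  rw [huniv] at h
  simp only [finrank_bot, Finset.card_univ, Fintype.card_fin] at h
  omega
end

section
/- The G-rank is invariant under taking powers: for any homogeneous polynomial f ∈ S^d V and any m ≥ 1, r^G_k(f^m) = r^G_k(f), where for g(t) ∈ GL(V)(k[[t]]) one has val_t(g(t)·f^m) = m·val_t(g(t)·f). -/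
/-- The Gauss `t`-adic valuation of a polynomial with coefficients in `k[[t]]`:
the minimum of the `t`-adic valuations of its coefficients. -/
noncomputable def tval {k : Type*} [Field k] {n : ℕ}
    (F : MvPolynomial (Fin n) (PowerSeries k)) : ℕ :=
  sInf {m : ℕ | ∃ d, PowerSeries.coeff (R := k) m (MvPolynomial.coeff d F) ≠ 0}

/-- The `t`-adic valuation of a power series. -/
noncomputable def psval {k : Type*} [Field k] (p : PowerSeries k) : ℕ :=
  sInf {m : ℕ | PowerSeries.coeff (R := k) m p ≠ 0}

/-- The action of a matrix `g` over `k[[t]]` on polynomials by linear substitution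
of the variables. -/
noncomputable def matAct {k : Type*} [Field k] {n : ℕ}
    (g : Matrix (Fin n) (Fin n) (PowerSeries k))
    (F : MvPolynomial (Fin n) (PowerSeries k)) : MvPolynomial (Fin n) (PowerSeries k) :=
  MvPolynomial.aeval (fun i => ∑ j, MvPolynomial.C (g i j) * MvPolynomial.X j) F

/-- The `G`-rank (`G = GLₙ`) of a (degree `d`) polynomial `F` over `k[[t]]`:
the infimum of `d · val_t(det g) / val_t(g·F)` over matrices `g` over `k[[t]]` with
nonzero determinant such that `val_t(g·F) > 0`. -/
noncomputable def GRank {k : Type*} [Field k] {n : ℕ} (d : ℕ)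
    (F : MvPolynomial (Fin n) (PowerSeries k)) : ℝ :=
  sInf {x : ℝ | ∃ g : Matrix (Fin n) (Fin n) (PowerSeries k),
    g.det ≠ 0 ∧ 0 < tval (matAct g F) ∧
    x = (d : ℝ) * (psval g.det : ℝ) / (tval (matAct g F) : ℝ)}

/-! Every nonzero `G` over `k[[t]]` factors as `t ^ tval G • G₁` with `G₁` nonzero modulo `t`.
Since reduction modulo `t` lands in the domain `k[x₁, …, xₙ]`, this makes `tval` additive on
products (Gauss' lemma), so `tval (g • F ^ m) = tval ((g • F) ^ m) = m * tval (g • F)`: each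
ratio in the infimum defining the `G`-rank of `F ^ m` (in degree `d * m`) equals the corresponding
ratio for `F`. -/

open MvPolynomial

section GaussValuation

variable {k : Type*} [Field k] {n : ℕ}

@[simp]
lemma tval_zero : tval (0 : MvPolynomial (Fin n) (PowerSeries k)) = 0 := by
  simp [tval]

lemma tval_le {G : MvPolynomial (Fin n) (PowerSeries k)} {m : ℕ} {e : Fin n →₀ ℕ}
    (h : PowerSeries.coeff m (G.coeff e) ≠ 0) : tval G ≤ m :=
  Nat.sInf_le ⟨e, h⟩

lemma exists_coeff_tval_ne_zero {G : MvPolynomial (Fin n) (PowerSeries k)} (hG : G ≠ 0) :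
    ∃ e, PowerSeries.coeff (tval G) (G.coeff e) ≠ 0 := by
  obtain ⟨e, he⟩ := ne_zero_iff.1 hG
  obtain ⟨m, hm⟩ : ∃ m, PowerSeries.coeff m (G.coeff e) ≠ 0 := by
    by_contra! h
    exact he (PowerSeries.ext h)
  exact Nat.sInf_mem (s := {m | ∃ e, PowerSeries.coeff m (G.coeff e) ≠ 0}) ⟨m, e, hm⟩

lemma tval_C_X_pow_mul {G : MvPolynomial (Fin n) (PowerSeries k)}
    (hG : map (PowerSeries.constantCoeff (R := k)) G ≠ 0) (a : ℕ) :
    tval (C (PowerSeries.X ^ a) * G) = a := by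
  obtain ⟨e, he⟩ := ne_zero_iff.1 hG
  have hcoeff : ∀ e, PowerSeries.coeff a ((C (PowerSeries.X ^ a) * G).coeff e) =
      PowerSeries.constantCoeff (G.coeff e) := fun e => by
      rw [coeff_C_mul, PowerSeries.coeff_X_pow_mul', if_pos le_rfl, Nat.sub_self,
        PowerSeries.coeff_zero_eq_constantCoeff_apply]
  have hne : PowerSeries.coeff a ((C (PowerSeries.X ^ a) * G).coeff e) ≠ 0 := by
    rwa [hcoeff, ← coeff_map]
  have hprod : C (PowerSeries.X ^ a) * G ≠ 0 :=
    ne_zero_iff.2 ⟨e, fun h => hne (by rw [h]; rfl)⟩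
  obtain ⟨e', he'⟩ := exists_coeff_tval_ne_zero hprod
  refine le_antisymm (tval_le hne) (not_lt.1 fun hlt => he' ?_)
  rw [coeff_C_mul, PowerSeries.coeff_X_pow_mul', if_neg (not_le.2 hlt)]

lemma exists_eq_C_X_pow_tval_mul {G : MvPolynomial (Fin n) (PowerSeries k)} (hG : G ≠ 0) :
    ∃ G₁, map (PowerSeries.constantCoeff (R := k)) G₁ ≠ 0 ∧
      G = C (PowerSeries.X ^ tval G) * G₁ := by
  obtain ⟨G₁, hG₁⟩ : C (PowerSeries.X ^ tval G) ∣ G := by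
    refine C_dvd_iff_dvd_coeff _ _ |>.2 fun e => PowerSeries.X_pow_dvd_iff.2 fun m hm => ?_
    by_contra h
    exact (tval_le h).not_gt hm
  refine ⟨G₁, fun h0 => ?_, hG₁⟩
  obtain ⟨e, he⟩ := exists_coeff_tval_ne_zero hG
  have hGe := congrArg (coeff e) hG₁
  have hG₁e := congrArg (coeff e) h0
  rw [coeff_C_mul] at hGe
  rw [coeff_map, coeff_zero] at hG₁e
  simp [hGe, PowerSeries.coeff_X_pow_mul', hG₁e] at he

lemma tval_mul {G H : MvPolynomial (Fin n) (PowerSeries k)} (hG : G ≠ 0) (hH : H ≠ 0) :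
    tval (G * H) = tval G + tval H := by
  obtain ⟨G₁, hG₁, hG_eq⟩ := exists_eq_C_X_pow_tval_mul hG
  obtain ⟨H₁, hH₁, hH_eq⟩ := exists_eq_C_X_pow_tval_mul hH
  have hGH : G * H = C (PowerSeries.X ^ (tval G + tval H)) * (G₁ * H₁) := by
    rw [pow_add, C_mul]
    nth_rw 1 [hG_eq, hH_eq]
    ring
  rw [hGH, tval_C_X_pow_mul (by rw [map_mul]; exact mul_ne_zero hG₁ hH₁)]

lemma tval_one : tval (1 : MvPolynomial (Fin n) (PowerSeries k)) = 0 := by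
  simpa using tval_C_X_pow_mul (k := k) (n := n) (G := 1) (by simp) 0

lemma tval_pow (G : MvPolynomial (Fin n) (PowerSeries k)) (m : ℕ) :
    tval (G ^ m) = m * tval G := by
  rcases eq_or_ne G 0 with rfl | hG
  · cases m <;> simp [tval_one]
  induction m with
  | zero => simp [tval_one]
  | succ m ih => rw [pow_succ, tval_mul (pow_ne_zero m hG) hG, ih, Nat.succ_mul]

lemma matAct_pow (g : Matrix (Fin n) (Fin n) (PowerSeries k))
    (F : MvPolynomial (Fin n) (PowerSeries k)) (m : ℕ) :
    matAct g (F ^ m) = matAct g F ^ m :=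
  map_pow _ F m

lemma GRank_pow (d : ℕ) {m : ℕ} (hm : m ≠ 0)
    (F : MvPolynomial (Fin n) (PowerSeries k)) :
    GRank (d * m) (F ^ m) = GRank d F := by
  have hratio : ∀ p v : ℕ, ((d * m : ℕ) : ℝ) * p / (m * v : ℕ) = (d : ℝ) * p / v := by
    intro p v
    push_cast
    rw [mul_right_comm, mul_comm (m : ℝ) v, mul_div_mul_right _ _ (by exact_mod_cast hm)]
  simp only [GRank, matAct_pow, tval_pow, Nat.mul_pos_iff_of_pos_left (Nat.pos_of_ne_zero hm),
    hratio]

end GaussValuation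

theorem stmt10_general {k : Type*} [Field k] {n : ℕ} (d m : ℕ) (hm : 1 ≤ m)
    (f : MvPolynomial (Fin n) k) :
    GRank (d * m) ((MvPolynomial.map (PowerSeries.C (R := k)) f) ^ m)
      = GRank d (MvPolynomial.map (PowerSeries.C (R := k)) f) :=
  GRank_pow d (by omega) _

/-- the `G`-rank is invariant under taking powers: for a nonzero homogeneous
polynomial `f` of degree `d` and `m ≥ 1`, `r^G_k(f^m) = r^G_k(f)` (the key point being
`val_t(g·f^m) = m · val_t(g·f)`). -/
theorem stmt10 {k : Type*} [Field k] {n : ℕ} (d m : ℕ) (hm : 1 ≤ m)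
    (f : MvPolynomial (Fin n) k) (hf : f ≠ 0) (hdeg : f.IsHomogeneous d) :
    GRank (d * m) ((MvPolynomial.map (PowerSeries.C (R := k)) f) ^ m)
      = GRank d (MvPolynomial.map (PowerSeries.C (R := k)) f) :=
  stmt10_general d m hm f
end

section
/- Let f = x₁²x₂ ∈ k[x₁,x₂] and let g = [[a,b],[c,d]] ∈ GL₂(k[[t]]) (entries in k[[t]], determinant nonzero). Set s = val_t(g·f), where g·f is the polynomial obtained by substituting x₁ ↦ ax₁ + cx₂, x₂ ↦ bx₁ + dx₂ (equivalently g·f = a²c·x₁³ + a(ad+2bc)·x₁²x₂ + b(bc+2ad)·x₁x₂² + b²d·x₂³). Then val_t(det g) ≥ s/2; consequently μ(g, x₁²x₂) = 3·val_t(det g)/s ≥ 3/2. -/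
/-!
Write `a, b, c, d` for `g 0 0, g 1 0, g 0 1, g 1 1`, so that `g · x₁²x₂ = L²M` with
`L = a x₁ + c x₂` and `M = b x₁ + d x₂`. Up to a constant, the Hessian covariant of a binary cubic
`p x₁³ + q x₁²x₂ + r x₁x₂² + u x₂³` has outer coefficients `q² - 3pr` and `r² - 3qu`; for `L²M`
these are `(a · det g)²` and `(c · det g)²`. Being quadratic in coefficients of valuation `≥ s`,
they give `s ≤ val(det g) + min(val a, val c)`, and `min(val a, val c) ≤ val(det g)` since
`det g = ad - cb`.
-/

open MvPolynomial Finsupp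
open scoped PowerSeries

section PowerSeriesOrder

variable {R : Type*} [CommRing R]

lemma PowerSeries.min_order_le_order_det_fin_two (g : Matrix (Fin 2) (Fin 2) R⟦X⟧) :
    min (g 0 0).order (g 0 1).order ≤ g.det.order := by
  rw [Matrix.det_fin_two, sub_eq_add_neg]
  refine le_trans ?_ (min_order_le_order_add _ _)
  rw [order_neg]
  exact min_le_min (le_trans le_self_add (le_order_mul _ _))
    (le_trans le_self_add (le_order_mul _ _))

lemma PowerSeries.le_order_of_sq_eq [IsDomain R] {s : ℕ∞} {p q r y : R⟦X⟧}
    (hp : s ≤ p.order) (hq : s ≤ q.order) (hr : s ≤ r.order)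
    (h : y ^ 2 = q ^ 2 - 3 * p * r) : s ≤ y.order := by
  have h2s : 2 * s ≤ 2 * y.order := calc
    2 * s ≤ min (q ^ 2).order (-(3 * p * r)).order := by
      rw [order_neg, order_pow, mul_assoc, order_mul, two_nsmul, two_mul]
      exact le_min (add_le_add hq hq)
        ((add_le_add hp hr).trans ((order_mul p r).symm.le.trans le_add_self))
    _ ≤ (y ^ 2).order := by rw [h, sub_eq_add_neg]; exact min_order_le_order_add _ _
    _ = 2 * y.order := by rw [order_pow, nsmul_eq_mul, Nat.cast_ofNat]
  exact (ENat.mul_le_mul_left_iff two_ne_zero (ENat.natCast_ne_top 2)).1 h2s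

end PowerSeriesOrder

section GaussValuation

variable {k : Type*} [Field k]

lemma psval_eq_order {p : PowerSeries k} (hp : p ≠ 0) : (psval p : ℕ∞) = p.order := by
  have hne : {m : ℕ | PowerSeries.coeff m p ≠ 0}.Nonempty :=
    PowerSeries.exists_coeff_ne_zero_iff_ne_zero.2 hp
  refine (PowerSeries.order_eq_nat.2 ⟨Nat.sInf_mem hne, fun i hi => ?_⟩).symm
  by_contra h
  exact Nat.notMem_of_lt_sInf hi h

lemma tval_le_order_coeff {n : ℕ} (F : MvPolynomial (Fin n) (PowerSeries k)) (d : Fin n →₀ ℕ) :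
    (tval F : ℕ∞) ≤ (F.coeff d).order :=
  PowerSeries.le_order _ _ fun i hi => by
    by_contra h
    have : tval F ≤ i := Nat.sInf_le ⟨d, h⟩
    exact absurd hi (by exact_mod_cast this.not_gt)

lemma coeff_matAct_X_sq_mul_X (g : Matrix (Fin 2) (Fin 2) (PowerSeries k)) :
    (matAct g (X 0 ^ 2 * X 1)).coeff (single 0 3) = g 0 0 ^ 2 * g 1 0 ∧
    (matAct g (X 0 ^ 2 * X 1)).coeff (single 0 2 + single 1 1) =
      g 0 0 ^ 2 * g 1 1 + 2 * g 0 0 * g 0 1 * g 1 0 ∧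
    (matAct g (X 0 ^ 2 * X 1)).coeff (single 0 1 + single 1 2) =
      g 0 1 ^ 2 * g 1 0 + 2 * g 0 0 * g 0 1 * g 1 1 ∧
    (matAct g (X 0 ^ 2 * X 1)).coeff (single 1 3) = g 0 1 ^ 2 * g 1 1 := by
  have hF : matAct g (X 0 ^ 2 * X 1) =
      monomial (single 0 3) (g 0 0 ^ 2 * g 1 0)
      + monomial (single 0 2 + single 1 1) (g 0 0 ^ 2 * g 1 1 + 2 * g 0 0 * g 0 1 * g 1 0)
      + monomial (single 0 1 + single 1 2) (g 0 1 ^ 2 * g 1 0 + 2 * g 0 0 * g 0 1 * g 1 1)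
      + monomial (single 1 3) (g 0 1 ^ 2 * g 1 1) := by
    simp only [matAct, map_mul, map_pow, aeval_X, Fin.sum_univ_two, monomial_add_single,
      ← C_mul_X_pow_eq_monomial, map_add, map_ofNat]
    ring
  simp only [hF, coeff_add, coeff_monomial]
  norm_num [Finsupp.ext_iff, Fin.forall_fin_two, Finsupp.single_apply]

lemma tval_matAct_X_sq_mul_X_le (g : Matrix (Fin 2) (Fin 2) (PowerSeries k)) :
    (tval (matAct g (X 0 ^ 2 * X 1)) : ℕ∞) ≤ 2 * g.det.order := by
  obtain ⟨h30, h21, h12, h03⟩ := coeff_matAct_X_sq_mul_X g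
  have hs := tval_le_order_coeff (matAct g (X 0 ^ 2 * X 1))
  have ha : _ ≤ (g.det * g 0 0).order :=
    PowerSeries.le_order_of_sq_eq (hs (single 0 3)) (hs (single 0 2 + single 1 1))
      (hs (single 0 1 + single 1 2)) (by rw [h30, h21, h12, Matrix.det_fin_two]; ring)
  have hc : _ ≤ (g.det * g 0 1).order :=
    PowerSeries.le_order_of_sq_eq (hs (single 0 2 + single 1 1))
      (hs (single 0 1 + single 1 2)) (hs (single 1 3))
      (by rw [h21, h12, h03, Matrix.det_fin_two]; ring)
  rw [PowerSeries.order_mul] at ha hc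
  calc _ ≤ g.det.order + min (g 0 0).order (g 0 1).order := by
        rw [← min_add_add_left]; exact le_min ha hc
    _ ≤ g.det.order + g.det.order := by
        gcongr; exact PowerSeries.min_order_le_order_det_fin_two g
    _ = 2 * g.det.order := (two_mul _).symm

end GaussValuation

theorem stmt12_general {k : Type*} [Field k]
    (g : Matrix (Fin 2) (Fin 2) (PowerSeries k)) (hg : g.det ≠ 0) :
    tval (matAct g (MvPolynomial.map (PowerSeries.C (R := k))
        (MvPolynomial.X 0 ^ 2 * MvPolynomial.X 1 : MvPolynomial (Fin 2) k)))
      ≤ 2 * psval g.det ∧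
    (0 < tval (matAct g (MvPolynomial.map (PowerSeries.C (R := k))
        (MvPolynomial.X 0 ^ 2 * MvPolynomial.X 1 : MvPolynomial (Fin 2) k))) →
      (3 : ℝ) / 2 ≤ (3 : ℝ) * (psval g.det : ℝ) /
        (tval (matAct g (MvPolynomial.map (PowerSeries.C (R := k))
          (MvPolynomial.X 0 ^ 2 * MvPolynomial.X 1 : MvPolynomial (Fin 2) k))) : ℝ)) := by
  simp only [map_mul, map_pow, MvPolynomial.map_X]
  have hle : tval (matAct g (X 0 ^ 2 * X 1)) ≤ 2 * psval g.det := by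
    have h := tval_matAct_X_sq_mul_X_le g
    rw [← psval_eq_order hg] at h
    exact_mod_cast h
  refine ⟨hle, fun hs => ?_⟩
  rw [div_le_div_iff₀ two_pos (by exact_mod_cast hs)]
  have : (tval (matAct g (X 0 ^ 2 * X 1)) : ℝ) ≤ 2 * psval g.det := by exact_mod_cast hle
  linarith

/-- for `f = x₁²x₂` and any `g ∈ GL₂(k[[t]])` (entries in `k[[t]]`, nonzero
determinant), with `s = val_t(g·f)`, one has `val_t(det g) ≥ s/2`; consequently
`μ(g, x₁²x₂) = 3·val_t(det g)/s ≥ 3/2` (when `s > 0`). Here `char k ≠ 2, 3`. -/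
theorem stmt12 {k : Type*} [Field k] (h2 : (2 : k) ≠ 0) (h3 : (3 : k) ≠ 0)
    (g : Matrix (Fin 2) (Fin 2) (PowerSeries k)) (hg : g.det ≠ 0) :
    tval (matAct g (MvPolynomial.map (PowerSeries.C (R := k))
        (MvPolynomial.X 0 ^ 2 * MvPolynomial.X 1 : MvPolynomial (Fin 2) k)))
      ≤ 2 * psval g.det ∧
    (0 < tval (matAct g (MvPolynomial.map (PowerSeries.C (R := k))
        (MvPolynomial.X 0 ^ 2 * MvPolynomial.X 1 : MvPolynomial (Fin 2) k))) →
      (3 : ℝ) / 2 ≤ (3 : ℝ) * (psval g.det : ℝ) /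
        (tval (matAct g (MvPolynomial.map (PowerSeries.C (R := k))
          (MvPolynomial.X 0 ^ 2 * MvPolynomial.X 1 : MvPolynomial (Fin 2) k))) : ℝ)) :=
  stmt12_general g hg
end
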